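/- arXiv:1808.01139 — 2 statements merged into one kernel-verified Lean document; each statement's English description precedes it below -/
import Mathlib

section
/- Let F : Γ⁺ → ℝ be a symmetric C¹ function on the positive cone Γ⁺ = {λ ∈ ℝⁿ : λ_i > 0 ∀i}, strictly increasing in each variable, and suppose a convex C² function u on a bounded domain Ω with Du(Ω) = Ω̃ satisfies F(λ(D²u(x))) = f(x) + c with osc_Ω̄ f ≤ δ, where δ < min{F(∞,…,∞) − F(Θ₀,∞,…,∞), F(0,…,0,Θ₀) − F(0,…,0)} and Θ₀ = (|Ω̃|/|Ω|)^{1/n}. If there exists a point x̄ ∈ Ω̄ with det D²u(x̄) = Θ₀ⁿ, then at every x ∈ Ω̄: F(min_i λ_i(x), …, min_i λ_i(x)) < F(∞,…,∞) and F(max_i λ_i(x), …, max_i λ_i(x)) > F(0,…,0); consequently there exist μ, ω > 0 depending only on F, Θ₀, δ with min_i λ_i(x) ≤ μ and max_i λ_i(x) ≥ ω. -/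
open Real Set Filter Finset

/-- Lemma 3.1 (eigenvalue pinching). `X` is the set of points of `Ω̄`, `lam x` the eigenvalue
vector of `D²u(x)` (all positive), `F` a symmetric function on the positive cone `Γ⁺`, monotone
in each variable, with finite diagonal limits `F0` at `0⁺` and `Finf` at `+∞`, and
`L₁ = F(Θ₀,∞,…,∞)`, `L₂ = F(0,…,0,Θ₀)`.  If `F(λ(x)) = f(x) + c` with `osc f ≤ δ`,
`δ < min{Finf − L₁, L₂ − F0}`, and at some point `det D²u(xb) = ∏ᵢ λᵢ(xb) = Θ₀ⁿ`, then at every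
point `F(min λ,…,min λ) < Finf` and `F(max λ,…,max λ) > F0`, and consequently there are
`μ, ω > 0` with `min λ ≤ μ` and `max λ ≥ ω` everywhere. -/
theorem stmt10 {n : ℕ} [NeZero n] {X : Type*} [Nonempty X]
    (F : (Fin n → ℝ) → ℝ) (Finf F0 L₁ L₂ Θ₀ δ c : ℝ)
    (lam : X → Fin n → ℝ) (f : X → ℝ)
    (hΘ : 0 < Θ₀) (hδ : 0 < δ)
    (hsym : ∀ (v : Fin n → ℝ) (σ : Equiv.Perm (Fin n)), F (v ∘ σ) = F v)
    (hmono : ∀ v w : Fin n → ℝ, (∀ i, 0 < v i) → (∀ i, v i ≤ w i) → F v ≤ F w)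
    (hstrict : ∀ v w : Fin n → ℝ, (∀ i, 0 < v i) → (∀ i, v i < w i) → F v < F w)
    (hdiagtop : Filter.Tendsto (fun t : ℝ => F (fun _ => t)) Filter.atTop (nhds Finf))
    (hdiag0 : Filter.Tendsto (fun t : ℝ => F (fun _ => t))
      (nhdsWithin 0 (Set.Ioi 0)) (nhds F0))
    (hL₁ : Filter.Tendsto (fun t : ℝ => F (Function.update (fun _ => t) 0 Θ₀))
      Filter.atTop (nhds L₁))
    (hL₂ : Filter.Tendsto (fun t : ℝ => F (Function.update (fun _ => t) 0 Θ₀))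
      (nhdsWithin 0 (Set.Ioi 0)) (nhds L₂))
    (hδmin : δ < min (Finf - L₁) (L₂ - F0))
    (hpos : ∀ x, ∀ i, 0 < lam x i)
    (heq : ∀ x, F (lam x) = f x + c)
    (hosc : ∀ x y, |f x - f y| ≤ δ)
    (hdet : ∃ xb, ∏ i, lam xb i = Θ₀ ^ n) :
    (∀ x, F (fun _ => Finset.univ.inf' Finset.univ_nonempty (lam x)) < Finf ∧
      F0 < F (fun _ => Finset.univ.sup' Finset.univ_nonempty (lam x))) ∧
    (∃ μ ω : ℝ, 0 < μ ∧ 0 < ω ∧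
      ∀ x, Finset.univ.inf' Finset.univ_nonempty (lam x) ≤ μ ∧
        ω ≤ Finset.univ.sup' Finset.univ_nonempty (lam x)) := by

  obtain ⟨xb, hxb⟩ := hdet
  set m : X → ℝ := fun x => Finset.univ.inf' Finset.univ_nonempty (lam x) with hm
  set M : X → ℝ := fun x => Finset.univ.sup' Finset.univ_nonempty (lam x) with hM
  have hmle : ∀ x i, m x ≤ lam x i := fun x i => Finset.inf'_le _ (Finset.mem_univ i)
  have hMle : ∀ x i, lam x i ≤ M x := fun x i => Finset.le_sup' _ (Finset.mem_univ i)
  have hmpos : ∀ x, 0 < m x := fun x => (Finset.lt_inf'_iff _).2 (fun i _ => hpos x i)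
  have hMpos : ∀ x, 0 < M x := fun x => (hpos x 0).trans_le (hMle x 0)
  have hswap : ∀ (T : ℝ) (j : Fin n), F (Function.update (fun _ => T) j Θ₀)
      = F (Function.update (fun _ => T) 0 Θ₀) := by
    intro T j
    rw [← hsym (Function.update (fun _ => T) 0 Θ₀) (Equiv.swap 0 j)]
    congr 1
    funext i
    rcases eq_or_ne i j with rfl | hij
    · simp [Function.update_apply, Equiv.swap_apply_right]
    · rcases eq_or_ne i 0 with rfl | hi0
      · simp [Function.update_apply, Equiv.swap_apply_left, Ne.symm hij, hij]
      · simp [Function.update_apply, Equiv.swap_apply_of_ne_of_ne hi0 hij, hij, hi0]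
  have hminΘ : m xb ≤ Θ₀ := by
    by_contra h
    push_neg at h
    have h1 : ∏ _i : Fin n, Θ₀ < ∏ i, lam xb i :=
      Finset.prod_lt_prod_of_nonempty (fun i _ => hΘ)
        (fun i _ => h.trans_le (hmle xb i)) Finset.univ_nonempty
    rw [Finset.prod_const, Finset.card_univ, Fintype.card_fin, hxb] at h1
    exact lt_irrefl _ h1
  have hmaxΘ : Θ₀ ≤ M xb := by
    by_contra h
    push_neg at h
    have h1 : ∏ i, lam xb i < ∏ _i : Fin n, Θ₀ :=
      Finset.prod_lt_prod_of_nonempty (fun i _ => hpos xb i)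
        (fun i _ => (hMle xb i).trans_lt h) Finset.univ_nonempty
    rw [Finset.prod_const, Finset.card_univ, Fintype.card_fin, hxb] at h1
    exact lt_irrefl _ h1
  have hA : F (lam xb) ≤ L₁ := by
    obtain ⟨j, -, hj⟩ := Finset.exists_mem_eq_inf' (Finset.univ_nonempty) (lam xb)
    have hle1 : F (lam xb) ≤ F (Function.update (fun _ => M xb) j Θ₀) := by
      apply hmono _ _ (hpos xb)
      intro i
      rcases eq_or_ne i j with rfl | hij
      · rw [Function.update_self, ← hj]
        exact hminΘ
      · rw [Function.update_of_ne hij]; exact hMle xb i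
    rw [hswap] at hle1
    refine hle1.trans (ge_of_tendsto hL₁ ?_)
    filter_upwards [Filter.eventually_ge_atTop (M xb)] with t ht
    apply hmono
    · intro i
      rcases eq_or_ne i 0 with rfl | hi
      · simp [Function.update_apply, hΘ]
      · simp [Function.update_apply, hi, hMpos xb]
    · intro i
      rcases eq_or_ne i 0 with rfl | hi
      · simp [Function.update_apply]
      · simp [Function.update_apply, hi, ht]
  have hB : L₂ ≤ F (lam xb) := by
    obtain ⟨j, -, hj⟩ := Finset.exists_mem_eq_sup' (Finset.univ_nonempty) (lam xb)
    refine le_of_tendsto hL₂ ?_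
    have hmem : Set.Ioo (0:ℝ) (m xb) ∈ nhdsWithin (0:ℝ) (Set.Ioi 0) :=
      Ioo_mem_nhdsGT_of_mem ⟨le_refl 0, hmpos xb⟩
    filter_upwards [hmem] with t ht
    rw [← hswap t j]
    apply hmono
    · intro i
      rcases eq_or_ne i 0 with rfl | hi
      · rcases eq_or_ne (0 : Fin n) j with rfl | hj0
        · simp [hΘ]
        · simp [Function.update_of_ne hj0, ht.1]
      · rcases eq_or_ne i j with rfl | hij
        · simp [hΘ]
        · simp [Function.update_of_ne hij, ht.1]
    · intro i
      rcases eq_or_ne i j with rfl | hij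
      · rw [Function.update_self, ← hj]; exact hmaxΘ
      · rw [Function.update_of_ne hij]
        exact le_trans ht.2.le (hmle xb i)
  have hub : ∀ x, F (lam x) ≤ L₁ + δ := by
    intro x
    have h1 := abs_le.1 (hosc x xb)
    have h2 := heq x
    have h3 := heq xb
    linarith [h1.2]
  have hlb : ∀ x, L₂ - δ ≤ F (lam x) := by
    intro x
    have h1 := abs_le.1 (hosc x xb)
    have h2 := heq x
    have h3 := heq xb
    linarith [h1.1]
  have hδ1 : δ < Finf - L₁ := lt_of_lt_of_le hδmin (min_le_left _ _)
  have hδ2 : δ < L₂ - F0 := lt_of_lt_of_le hδmin (min_le_right _ _)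
  have hFm : ∀ x, F (fun _ => m x) ≤ F (lam x) := fun x =>
    hmono _ _ (fun _ => hmpos x) (fun i => hmle x i)
  have hFM : ∀ x, F (lam x) ≤ F (fun _ => M x) := fun x =>
    hmono _ _ (hpos x) (fun i => hMle x i)
  constructor
  · intro x
    constructor
    · exact lt_of_le_of_lt ((hFm x).trans (hub x)) (by linarith)
    · exact lt_of_lt_of_le (by linarith [hlb x]) ((hlb x).trans (hFM x))
  · have hμex : ∃ μ : ℝ, 0 < μ ∧ L₁ + δ < F (fun _ => μ) := by
      have h1 : ∀ᶠ t : ℝ in Filter.atTop, L₁ + δ < F (fun _ => t) :=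
        hdiagtop.eventually (eventually_gt_nhds (by linarith))
      obtain ⟨μ, h2, h3⟩ := (h1.and (Filter.eventually_gt_atTop 0)).exists
      exact ⟨μ, h3, h2⟩
    have hωex : ∃ ω : ℝ, 0 < ω ∧ F (fun _ => ω) < L₂ - δ := by
      have h1 : ∀ᶠ t : ℝ in nhdsWithin (0:ℝ) (Set.Ioi 0), F (fun _ => t) < L₂ - δ :=
        hdiag0.eventually (eventually_lt_nhds (by linarith))
      obtain ⟨ω, h2, h3⟩ := (h1.and self_mem_nhdsWithin).exists
      exact ⟨ω, h3, h2⟩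
    obtain ⟨μ, hμpos, hμ⟩ := hμex
    obtain ⟨ω, hωpos, hω⟩ := hωex
    refine ⟨μ, ω, hμpos, hωpos, fun x => ⟨?_, ?_⟩⟩
    · by_contra h
      push_neg at h
      have : F (fun _ => μ) ≤ F (fun _ => m x) :=
        hmono _ _ (fun _ => hμpos) (fun _ => h.le)
      linarith [hFm x, hub x]
    · by_contra h
      push_neg at h
      have : F (fun _ => M x) ≤ F (fun _ => ω) :=
        hmono _ _ (fun _ => hMpos x) (fun _ => h.le)
      linarith [hFM x, hlb x]
end

section
/- Let u be C³ and uniformly convex, ũ its Legendre transform, F a C¹ symmetric function on the positive cone, and define F̃(μ₁,…,μₙ) := −F(1/μ₁,…,1/μₙ). If u satisfies F(λ(D²u(x))) = f(x) + c on Ω with Du(Ω) = Ω̃, then ũ satisfies F̃(λ(D²ũ(x̃))) = −f(Dũ(x̃)) − c on Ω̃ with Dũ(Ω̃) = Ω. -/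
open Set Filter Topology
open scoped Matrix

/-!
The Legendre transform inverts the gradient map: `Dũ ∘ Du = id` on `Ω`. Since `D²u` is positive
definite, the inverse function theorem makes `Ω̃ = Du(Ω)` open, so `Dũ` is differentiable on it
and the chain rule gives `D²u(x) · D²ũ(Du x) = 1`. Hence the eigenvalues of `D²ũ(x̃)` are the
reciprocals of those of `D²u(x)`, up to order, and the symmetry of `F` turns the equation for `u`
into the equation for `ũ`.
-/

theorem exists_perm_eq_comp_of_map_univ_eq {α : Type*} [LinearOrder α] {n : ℕ} {f g : Fin n → α}
    (h : Multiset.map f Finset.univ.val = Multiset.map g Finset.univ.val) :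
    ∃ σ : Equiv.Perm (Fin n), f = g ∘ σ := by
  have hperm : (List.ofFn f).Perm (List.ofFn g) := by
    simpa only [Fin.univ_val_map, Multiset.coe_eq_coe] using h
  have hsorted : f ∘ Tuple.sort f = g ∘ Tuple.sort g :=
    List.ofFn_injective <| List.Perm.eq_of_sortedLE
      (List.sortedLE_ofFn_iff.2 (Tuple.monotone_sort f))
      (List.sortedLE_ofFn_iff.2 (Tuple.monotone_sort g))
      (((Tuple.sort f).ofFn_comp_perm f).trans (hperm.trans ((Tuple.sort g).ofFn_comp_perm g).symm))
  refine ⟨(Tuple.sort f).symm.trans (Tuple.sort g), funext fun i => ?_⟩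
  simpa using congrFun hsorted ((Tuple.sort f).symm i)

namespace Matrix.IsHermitian

variable {𝕜 ι : Type*} [RCLike 𝕜] [Fintype ι] [DecidableEq ι] {A B : Matrix ι ι 𝕜}

theorem map_inv_eigenvalues_eq_of_mul_eq_one (hA : A.IsHermitian) (hB : B.IsHermitian)
    (hAB : A * B = 1) :
    Multiset.map (fun i => (hB.eigenvalues i)⁻¹) Finset.univ.val =
      Multiset.map hA.eigenvalues Finset.univ.val := by
  have hB_cfc : B = cfc (fun x : ℝ => x⁻¹) A := by
    rw [cfc_ringInverse_id (a := A) (IsUnit.of_mul_eq_one B hAB) hA.isSelfAdjoint,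
      ← nonsing_inv_eq_ringInverse, inv_eq_right_inv hAB]
  have hroots : Multiset.map ((RCLike.ofReal : ℝ → 𝕜) ∘ hB.eigenvalues) Finset.univ.val =
      Multiset.map ((RCLike.ofReal : ℝ → 𝕜) ∘ fun i => (hA.eigenvalues i)⁻¹) Finset.univ.val := by
    rw [← hB.roots_charpoly_eq_eigenvalues, hB_cfc, hA.charpoly_cfc_eq, Polynomial.roots_prod]
    · simp
    · simp [Finset.prod_ne_zero_iff, Polynomial.X_sub_C_ne_zero]
  rw [← Multiset.map_map, ← Multiset.map_map] at hroots
  have := congrArg (Multiset.map Inv.inv) (Multiset.map_injective RCLike.ofReal_injective hroots)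
  simpa [Multiset.map_map, Function.comp_def] using this

end Matrix.IsHermitian

theorem isOpen_image_of_hasStrictFDerivAt_range_eq_top {𝕜 E F : Type*} [NontriviallyNormedField 𝕜]
    [NormedAddCommGroup E] [NormedSpace 𝕜 E] [CompleteSpace E]
    [NormedAddCommGroup F] [NormedSpace 𝕜 F] [CompleteSpace F]
    {f : E → F} {f' : E → E →L[𝕜] F} {s : Set E} (hs : IsOpen s)
    (hf : ∀ x ∈ s, HasStrictFDerivAt f (f' x) x) (hrange : ∀ x ∈ s, (f' x).range = ⊤) :
    IsOpen (f '' s) := by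
  rw [isOpen_iff_mem_nhds]
  rintro _ ⟨x, hx, rfl⟩
  rw [← (hf x hx).map_nhds_eq_of_surj (hrange x hx)]
  exact image_mem_map (hs.mem_nhds hx)

theorem fderiv_comp_fderiv_eq_id_of_leftInverse {𝕜 E F : Type*} [NontriviallyNormedField 𝕜]
    [NormedAddCommGroup E] [NormedSpace 𝕜 E] [NormedAddCommGroup F] [NormedSpace 𝕜 F]
    {f : E → F} {g : F → E} {x : E} (hg : DifferentiableAt 𝕜 g (f x))
    (hf : DifferentiableAt 𝕜 f x) (hgf : g ∘ f =ᶠ[𝓝 x] id) :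
    (fderiv 𝕜 g (f x)).comp (fderiv 𝕜 f x) = ContinuousLinearMap.id 𝕜 E := by
  rw [← fderiv_comp x hg hf, hgf.fderiv_eq, fderiv_id]

section Gradient

variable {E : Type*} [NormedAddCommGroup E] [InnerProductSpace ℝ E] [CompleteSpace E]
  {v : E → ℝ} {x : E}

theorem ContDiffAt.gradient {k : WithTop ℕ∞} (h : ContDiffAt ℝ (k + 1) v x) :
    ContDiffAt ℝ k (gradient v) x :=
  (InnerProductSpace.toDual ℝ E).symm.toContinuousLinearEquiv.contDiff.contDiffAt.comp x
    (h.fderiv_right le_rfl)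

theorem ContDiffAt.differentiableAt_gradient {k : WithTop ℕ∞} (h : ContDiffAt ℝ k v x)
    (hk : 2 ≤ k) : DifferentiableAt ℝ (_root_.gradient v) x :=
  (ContDiffAt.gradient (k := 1) (h.of_le hk)).differentiableAt one_ne_zero

theorem fderiv_fderiv_apply_eq_inner_fderiv_gradient (hd : DifferentiableAt ℝ (gradient v) x)
    (w z : E) :
    fderiv ℝ (fun y => fderiv ℝ v y w) x z = inner ℝ (fderiv ℝ (gradient v) x z) w := by
  have hv : (fun y => fderiv ℝ v y w) = fun y => inner ℝ (gradient v y) w := by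
    funext y
    simp [gradient, InnerProductSpace.toDual_symm_apply]
  rw [hv, fderiv_inner_apply ℝ hd (differentiableAt_const w)]
  simp

end Gradient

section Hessian

variable {n : ℕ} {u v : EuclideanSpace ℝ (Fin n) → ℝ} {x : EuclideanSpace ℝ (Fin n)}
  {M : Matrix (Fin n) (Fin n) ℝ}

theorem eq_transpose_toMatrix_fderiv_gradient (hd : DifferentiableAt ℝ (gradient v) x)
    (hM : ∀ i j, M i j = fderiv ℝ (fun y => fderiv ℝ v y (EuclideanSpace.single j 1)) x
      (EuclideanSpace.single i 1)) :
    M = (LinearMap.toMatrix (EuclideanSpace.basisFun (Fin n) ℝ).toBasis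
      (EuclideanSpace.basisFun (Fin n) ℝ).toBasis (fderiv ℝ (gradient v) x))ᵀ := by
  ext i j
  rw [hM, fderiv_fderiv_apply_eq_inner_fderiv_gradient hd, Matrix.transpose_apply,
    LinearMap.toMatrix_apply]
  simp [EuclideanSpace.inner_single_right]

theorem range_fderiv_gradient_eq_top (hd : DifferentiableAt ℝ (gradient v) x)
    (hM : ∀ i j, M i j = fderiv ℝ (fun y => fderiv ℝ v y (EuclideanSpace.single j 1)) x
      (EuclideanSpace.single i 1)) (hpd : M.PosDef) :
    (fderiv ℝ (gradient v) x).range = ⊤ := by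
  have hunit := hpd.isUnit
  rw [eq_transpose_toMatrix_fderiv_gradient hd hM, Matrix.isUnit_transpose,
    Matrix.isUnit_iff_isUnit_det, LinearMap.det_toMatrix, ← LinearMap.isUnit_iff_isUnit_det] at hunit
  exact LinearMap.range_eq_top.2 (Module.End.isUnit_iff _ |>.1 hunit).2

theorem isOpen_image_gradient_of_posDef {Ω : Set (EuclideanSpace ℝ (Fin n))} (hΩ : IsOpen Ω)
    (hu : ContDiffOn ℝ 2 u Ω) {H : EuclideanSpace ℝ (Fin n) → Matrix (Fin n) (Fin n) ℝ}
    (hH : ∀ x ∈ Ω, ∀ i j, H x i j = fderiv ℝ (fun y => fderiv ℝ u y (EuclideanSpace.single j 1)) x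
      (EuclideanSpace.single i 1)) (hpd : ∀ x ∈ Ω, (H x).PosDef) :
    IsOpen (gradient u '' Ω) := by
  have hdu : ∀ x ∈ Ω, ContDiffAt ℝ 1 (gradient u) x := fun x hx =>
    (hu.contDiffAt (hΩ.mem_nhds hx)).gradient
  exact isOpen_image_of_hasStrictFDerivAt_range_eq_top hΩ
    (fun x hx => (hdu x hx).hasStrictFDerivAt one_ne_zero)
    (fun x hx => range_fderiv_gradient_eq_top ((hdu x hx).differentiableAt one_ne_zero)
      (hH x hx) (hpd x hx))

theorem hessian_mul_hessian_eq_one_of_leftInverse {Mt : Matrix (Fin n) (Fin n) ℝ}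
    (hM : ∀ i j, M i j = fderiv ℝ (fun y => fderiv ℝ u y (EuclideanSpace.single j 1)) x
      (EuclideanSpace.single i 1))
    (hMt : ∀ i j, Mt i j = fderiv ℝ (fun y => fderiv ℝ v y (EuclideanSpace.single j 1))
      (gradient u x) (EuclideanSpace.single i 1))
    (hdu : DifferentiableAt ℝ (gradient u) x) (hdv : DifferentiableAt ℝ (gradient v) (gradient u x))
    (hinv : gradient v ∘ gradient u =ᶠ[𝓝 x] id) :
    M * Mt = 1 := by
  rw [eq_transpose_toMatrix_fderiv_gradient hdu hM, eq_transpose_toMatrix_fderiv_gradient hdv hMt,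
    ← Matrix.transpose_mul, ← LinearMap.toMatrix_comp, ← ContinuousLinearMap.toLinearMap_comp,
    fderiv_comp_fderiv_eq_id_of_leftInverse hdv hdu hinv, ContinuousLinearMap.coe_id,
    LinearMap.toMatrix_id, Matrix.transpose_one]

end Hessian

theorem stmt13_general {n : ℕ} (Ω Ωt : Set (EuclideanSpace ℝ (Fin n))) (hΩ : IsOpen Ω)
    (u ut : EuclideanSpace ℝ (Fin n) → ℝ) (f : EuclideanSpace ℝ (Fin n) → ℝ) (c : ℝ)
    (hu : ContDiffOn ℝ 3 u Ω) (hut : ContDiffOn ℝ 3 ut Ωt)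
    (F : (Fin n → ℝ) → ℝ)
    (hFsym : ∀ (v : Fin n → ℝ) (σ : Equiv.Perm (Fin n)), F (v ∘ σ) = F v)
    (H Ht : EuclideanSpace ℝ (Fin n) → Matrix (Fin n) (Fin n) ℝ)
    (hH : ∀ x i j, H x i j =
      fderiv ℝ (fun y => fderiv ℝ u y (EuclideanSpace.single j 1)) x (EuclideanSpace.single i 1))
    (hHt : ∀ x i j, Ht x i j =
      fderiv ℝ (fun y => fderiv ℝ ut y (EuclideanSpace.single j 1)) x (EuclideanSpace.single i 1))
    (hsym : ∀ x, (H x).IsHermitian) (hsymt : ∀ x, (Ht x).IsHermitian)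
    (hpd : ∀ x ∈ Ω, (H x).PosDef)
    (hinv : ∀ x ∈ Ω, gradient ut (gradient u x) = x)
    (himg : (fun x => gradient u x) '' Ω = Ωt)
    (heq : ∀ x ∈ Ω, F ((hsym x).eigenvalues) = f x + c) :
    (∀ xt ∈ Ωt, -F (fun i => ((hsymt xt).eigenvalues i)⁻¹) = -f (gradient ut xt) - c) ∧
    (fun xt => gradient ut xt) '' Ωt = Ω := by
  have hΩt : IsOpen Ωt :=
    himg ▸ isOpen_image_gradient_of_posDef hΩ (hu.of_le (by norm_num)) (fun x _ => hH x) hpd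
  refine ⟨?_, himg ▸ LeftInvOn.image_image hinv⟩
  rw [← himg]
  rintro _ ⟨x, hx, rfl⟩
  have hxt : gradient u x ∈ Ωt := himg ▸ mem_image_of_mem _ hx
  have hHHt : H x * Ht (gradient u x) = 1 :=
    hessian_mul_hessian_eq_one_of_leftInverse (hH x) (hHt _)
      ((hu.contDiffAt (hΩ.mem_nhds hx)).differentiableAt_gradient (by norm_num))
      ((hut.contDiffAt (hΩt.mem_nhds hxt)).differentiableAt_gradient (by norm_num))
      (eventually_of_mem (hΩ.mem_nhds hx) hinv)
  obtain ⟨σ, hσ⟩ := exists_perm_eq_comp_of_map_univ_eq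
    ((hsym x).map_inv_eigenvalues_eq_of_mul_eq_one (hsymt _) hHHt)
  rw [hσ, hFsym, heq x hx, hinv x hx]
  ring

/-- The dual equation under Legendre transform: if `u` (C³, uniformly convex) satisfies
`F(λ(D²u x)) = f x + c` on `Ω` with `Du(Ω) = Ω̃`, and `ũ` is its Legendre transform
(`ũ(Du x) = ⟨x, Du x⟩ − u x`, `Dũ ∘ Du = id`), then with `F̃(μ) := −F(1/μ₁,…,1/μₙ)` the dual
solution satisfies `F̃(λ(D²ũ x̃)) = −f(Dũ x̃) − c` on `Ω̃` and `Dũ(Ω̃) = Ω`. -/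
theorem stmt13 {n : ℕ} (Ω Ωt : Set (EuclideanSpace ℝ (Fin n))) (hΩ : IsOpen Ω)
    (u ut : EuclideanSpace ℝ (Fin n) → ℝ) (f : EuclideanSpace ℝ (Fin n) → ℝ) (c : ℝ)
    (hu : ContDiffOn ℝ 3 u Ω) (hut : ContDiffOn ℝ 3 ut Ωt)
    (F : (Fin n → ℝ) → ℝ)
    (hFsym : ∀ (v : Fin n → ℝ) (σ : Equiv.Perm (Fin n)), F (v ∘ σ) = F v)
    (H Ht : EuclideanSpace ℝ (Fin n) → Matrix (Fin n) (Fin n) ℝ)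
    (hH : ∀ x i j, H x i j =
      fderiv ℝ (fun y => fderiv ℝ u y (EuclideanSpace.single j 1)) x (EuclideanSpace.single i 1))
    (hHt : ∀ x i j, Ht x i j =
      fderiv ℝ (fun y => fderiv ℝ ut y (EuclideanSpace.single j 1)) x (EuclideanSpace.single i 1))
    (hsym : ∀ x, (H x).IsHermitian) (hsymt : ∀ x, (Ht x).IsHermitian)
    (hpd : ∀ x ∈ Ω, (H x).PosDef)
    (hleg : ∀ x ∈ Ω, ut (gradient u x) = inner ℝ x (gradient u x) - u x)
    (hinv : ∀ x ∈ Ω, gradient ut (gradient u x) = x)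
    (himg : (fun x => gradient u x) '' Ω = Ωt)
    (heq : ∀ x ∈ Ω, F ((hsym x).eigenvalues) = f x + c) :
    (∀ xt ∈ Ωt, -F (fun i => ((hsymt xt).eigenvalues i)⁻¹) = -f (gradient ut xt) - c) ∧
    (fun xt => gradient ut xt) '' Ωt = Ω :=
  stmt13_general Ω Ωt hΩ u ut f c hu hut F hFsym H Ht hH hHt hsym hsymt hpd hinv himg heq
end
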